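/- The (q,b)-Fibonacci polynomials F_n(x,b,s,q) (defined by the explicit sum) satisfy the recursion F_n(x,b,s,q) = x·F_{n-1}(x,qb,qs,q) + (qs/((1-qb)(1-q²b)))·F_{n-2}(x,q²b,q²s,q) for all n ≥ 2, with F_0 = 0, F_1 = 1. -/

import Mathlib

open Finset

noncomputable section

/-- The field `ℚ(q,b,s,x)` of rational functions. -/
abbrev K : Type := FractionRing (MvPolynomial (Fin 4) ℚ)

def q : K := algebraMap (MvPolynomial (Fin 4) ℚ) K (MvPolynomial.X 0)
def b : K := algebraMap (MvPolynomial (Fin 4) ℚ) K (MvPolynomial.X 1)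
def s : K := algebraMap (MvPolynomial (Fin 4) ℚ) K (MvPolynomial.X 2)
def x : K := algebraMap (MvPolynomial (Fin 4) ℚ) K (MvPolynomial.X 3)

/-- The q-Pochhammer symbol `(a;q)_n = ∏_{j=0}^{n-1} (1 - q^j a)`. -/
def qPoch (a : K) (n : ℕ) : K := ∏ j ∈ range n, (1 - q ^ j * a)

/-- The Gaussian binomial coefficient `[n choose k]_q`. -/
def gbinom (n k : ℕ) : K := qPoch q n / (qPoch q k * qPoch q (n - k))

/-- The (q,b)-Fibonacci polynomials, defined by the explicit sum (2.4),
as functions of the parameters `b` and `s`. -/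
def qbFib (n : ℕ) (b s : K) : K :=
  if n = 0 then 0 else
    ∑ k ∈ range ((n - 1) / 2 + 1),
      q ^ (k ^ 2) * gbinom (n - 1 - k) k * s ^ k * x ^ (n - 1 - 2 * k) /
        (qPoch (q * b) k * qPoch (q ^ (n - k) * b) k)


/-!
Write the `k`-th term of `F_n` as `T_{k,d}(b,s)` with `d = n - 1 - 2k` the power of `x`, and set the
terms with `2k ≥ n` to zero, so that all three sums of the recursion run over a common range.
Termwise the recursion reads
`T_{k+1,d+1}(b,s) = x T_{k+1,d}(qb,qs) + qs/((1-qb)(1-q²b)) T_{k,d+1}(q²b,q²s)`: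
after clearing the Pochhammer denominators this is a combination of the two q-Pascal rules.
The boundary terms are the degenerate cases `T_{0,d+1}(b,s) = x T_{0,d}(qb,qs)` and
`T_{k+1,0}(b,s) = qs/((1-qb)(1-q²b)) T_{k,0}(q²b,q²s)`.
-/

lemma one_sub_q_pow_succ_ne_zero (j : ℕ) : (1 : K) - q ^ (j + 1) ≠ 0 := by
  rw [q, ← map_pow, ← map_one (algebraMap (MvPolynomial (Fin 4) ℚ) K), ← map_sub, Ne,
    IsFractionRing.to_map_eq_zero_iff]
  intro h
  simpa using congrArg (MvPolynomial.eval fun _ => (0 : ℚ)) h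

lemma one_sub_q_pow_mul_b_ne_zero (j : ℕ) : (1 : K) - q ^ j * b ≠ 0 := by
  rw [q, b, ← map_pow, ← map_mul, ← map_one (algebraMap (MvPolynomial (Fin 4) ℚ) K),
    ← map_sub, Ne, IsFractionRing.to_map_eq_zero_iff]
  intro h
  simpa using congrArg (MvPolynomial.eval fun _ => (0 : ℚ)) h

lemma one_sub_q_mul_b_ne_zero : (1 : K) - q * b ≠ 0 := by
  simpa using one_sub_q_pow_mul_b_ne_zero 1

lemma qPoch_zero (a : K) : qPoch a 0 = 1 := prod_range_zero _

lemma qPoch_succ (a : K) (k : ℕ) : qPoch a (k + 1) = qPoch a k * (1 - q ^ k * a) :=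
  prod_range_succ _ _

lemma qPoch_succ' (a : K) (k : ℕ) : qPoch a (k + 1) = (1 - a) * qPoch (q * a) k := by
  rw [qPoch, prod_range_succ', pow_zero, one_mul, mul_comm]
  congr 1
  exact prod_congr rfl fun i _ => by ring

lemma qPoch_succ_mul (a : K) (k : ℕ) :
    qPoch a (k + 1) * (1 - q ^ (k + 1) * a) = (1 - a) * (1 - q * a) * qPoch (q ^ 2 * a) k := by
  rw [← qPoch_succ, qPoch_succ', qPoch_succ', ← mul_assoc, ← mul_assoc, ← pow_two]

lemma qPoch_q_ne_zero (m : ℕ) : qPoch q m ≠ 0 :=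
  prod_ne_zero_iff.mpr fun i _ => by
    simpa only [← pow_succ] using one_sub_q_pow_succ_ne_zero i

lemma qPoch_q_pow_mul_b_ne_zero (t k : ℕ) : qPoch (q ^ t * b) k ≠ 0 :=
  prod_ne_zero_iff.mpr fun i _ => by
    simpa only [← mul_assoc, ← pow_add] using one_sub_q_pow_mul_b_ne_zero (i + t)

lemma qPoch_q_mul_b_succ (k : ℕ) :
    qPoch (q * b) (k + 1) =
      (1 - q * b) * (1 - q ^ 2 * b) * qPoch (q ^ 3 * b) k / (1 - q ^ (k + 2) * b) := by
  rw [eq_div_iff (one_sub_q_pow_mul_b_ne_zero (k + 2)), show q ^ (k + 2) * b = q ^ (k + 1) * (q * b)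
    by ring, qPoch_succ_mul, show q ^ 2 * (q * b) = q ^ 3 * b by ring, show q * (q * b) = q ^ 2 * b
    by ring]

lemma gbinom_zero (m : ℕ) : gbinom m 0 = 1 := by
  rw [gbinom, qPoch_zero, one_mul, Nat.sub_zero, div_self (qPoch_q_ne_zero m)]

lemma gbinom_self (m : ℕ) : gbinom m m = 1 := by
  rw [gbinom, Nat.sub_self, qPoch_zero, mul_one, div_self (qPoch_q_ne_zero m)]

/-- The two q-Pascal rules for `[k+d+2 choose k+1]_q`, combined with weights `1`, `-q^(k+2) b`. -/
lemma gbinom_pascal_b (k d : ℕ) :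
    (1 - q ^ (k + 2) * b) * gbinom (k + d + 2) (k + 1) =
      q ^ (k + 1) * (1 - q * b) * gbinom (k + d + 1) (k + 1) +
        (1 - q ^ (k + d + 3) * b) * gbinom (k + d + 1) k := by
  unfold gbinom
  rw [show k + d + 2 - (k + 1) = d + 1 by omega, show k + d + 1 - k = d + 1 by omega,
    show k + d + 1 - (k + 1) = d by omega, show k + d + 2 = k + d + 1 + 1 by omega,
    qPoch_succ q (k + d + 1), qPoch_succ q k, qPoch_succ q d]
  simp only [← pow_succ]
  have := qPoch_q_ne_zero (k + d + 1)
  have := qPoch_q_ne_zero k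
  have := qPoch_q_ne_zero d
  have := one_sub_q_pow_succ_ne_zero k
  have := one_sub_q_pow_succ_ne_zero d
  field_simp
  ring

def qbTerm (k d : ℕ) (b s : K) : K :=
  q ^ (k ^ 2) * gbinom (k + d) k * s ^ k * x ^ d /
    (qPoch (q * b) k * qPoch (q ^ (k + d + 1) * b) k)

lemma qbTerm_zero_left (d : ℕ) (b s : K) : qbTerm 0 d b s = x ^ d := by
  simp [qbTerm, gbinom_zero, qPoch_zero]

lemma qbTerm_succ_succ (k d : ℕ) (y : K) :
    qbTerm (k + 1) (d + 1) b y = x * qbTerm (k + 1) d (q * b) (q * y) +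
      q * y / ((1 - q * b) * (1 - q ^ 2 * b)) * qbTerm k (d + 1) (q ^ 2 * b) (q ^ 2 * y) := by
  unfold qbTerm
  rw [show k + 1 + (d + 1) = k + d + 2 by ring, show k + 1 + d = k + d + 1 by ring,
    show k + (d + 1) = k + d + 1 by ring, show q * (q * b) = q ^ 2 * b by ring,
    show q * (q ^ 2 * b) = q ^ 3 * b by ring,
    show q ^ (k + d + 2 + 1) * b = q ^ (k + d + 3) * b by ring,
    show q ^ (k + d + 1 + 1) * (q * b) = q ^ (k + d + 3) * b by ring,
    show q ^ (k + d + 1 + 1) * (q ^ 2 * b) = q ^ (k + d + 4) * b by ring,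
    qPoch_q_mul_b_succ, qPoch_succ' (q ^ 2 * b), qPoch_succ' (q ^ (k + d + 3) * b),
    show q * (q ^ 2 * b) = q ^ 3 * b by ring,
    show q * (q ^ (k + d + 3) * b) = q ^ (k + d + 4) * b by ring]
  have := one_sub_q_mul_b_ne_zero
  have := one_sub_q_pow_mul_b_ne_zero 2
  have := one_sub_q_pow_mul_b_ne_zero (k + 2)
  have := one_sub_q_pow_mul_b_ne_zero (k + d + 3)
  have := qPoch_q_pow_mul_b_ne_zero 3 k
  have := qPoch_q_pow_mul_b_ne_zero (k + d + 4) k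
  have hP := gbinom_pascal_b k d
  -- as atoms, these factors are seen by `field_simp` to be nonzero
  generalize 1 - q ^ (k + 2) * b = u at *
  generalize 1 - q ^ (k + d + 3) * b = v at *
  generalize qPoch (q ^ 3 * b) k = A at *
  generalize qPoch (q ^ (k + d + 4) * b) k = B at *
  field_simp
  linear_combination q ^ (k + 1) ^ 2 * y ^ (k + 1) * x ^ (d + 1) * hP

lemma qbTerm_succ_zero (k : ℕ) (y : K) :
    qbTerm (k + 1) 0 b y =
      q * y / ((1 - q * b) * (1 - q ^ 2 * b)) * qbTerm k 0 (q ^ 2 * b) (q ^ 2 * y) := by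
  unfold qbTerm
  simp only [Nat.add_zero, gbinom_self]
  rw [show q * (q ^ 2 * b) = q ^ 3 * b by ring,
    show q ^ (k + 1) * (q ^ 2 * b) = q ^ (k + 3) * b by ring,
    show k + 1 + 1 = k + 2 by ring, qPoch_q_mul_b_succ, qPoch_succ' (q ^ (k + 2) * b),
    show q * (q ^ (k + 2) * b) = q ^ (k + 3) * b by ring]
  have := one_sub_q_mul_b_ne_zero
  have := one_sub_q_pow_mul_b_ne_zero 2
  have := one_sub_q_pow_mul_b_ne_zero (k + 2)
  have := qPoch_q_pow_mul_b_ne_zero 3 k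
  have := qPoch_q_pow_mul_b_ne_zero (k + 3) k
  generalize 1 - q ^ (k + 2) * b = u at *
  generalize qPoch (q ^ 3 * b) k = A at *
  generalize qPoch (q ^ (k + 3) * b) k = B at *
  field_simp
  ring

def qbSummand (n k : ℕ) (b s : K) : K :=
  if 2 * k < n then qbTerm k (n - 1 - 2 * k) b s else 0

lemma qbFib_eq_sum_qbSummand {n m : ℕ} (h : n ≤ 2 * m) (b s : K) :
    qbFib n b s = ∑ k ∈ range m, qbSummand n k b s := by
  rcases Nat.eq_zero_or_pos n with rfl | hn
  · simp [qbFib, qbSummand]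
  rw [qbFib, if_neg hn.ne',
    ← sum_subset (range_subset_range.mpr (by omega : (n - 1) / 2 + 1 ≤ m))]
  · refine sum_congr rfl fun k hk => ?_
    rw [mem_range] at hk
    rw [qbSummand, if_pos (by omega), qbTerm, show k + (n - 1 - 2 * k) = n - 1 - k by omega,
      show n - 1 - k + 1 = n - k by omega]
  · intro k _ hk
    rw [mem_range] at hk
    rw [qbSummand, if_neg (by omega)]

lemma qbSummand_succ_zero (n : ℕ) (b s : K) : qbSummand (n + 1) 0 b s = x ^ n := by
  simp [qbSummand, qbTerm_zero_left]

lemma qbSummand_succ_succ (n k : ℕ) (y : K) :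
    qbSummand (n + 2) (k + 1) b y = x * qbSummand (n + 1) (k + 1) (q * b) (q * y) +
      q * y / ((1 - q * b) * (1 - q ^ 2 * b)) * qbSummand n k (q ^ 2 * b) (q ^ 2 * y) := by
  unfold qbSummand
  rcases lt_trichotomy (2 * k + 1) n with h | rfl | h
  · obtain ⟨d, rfl⟩ : ∃ d, n = 2 * k + d + 2 := ⟨n - 2 * k - 2, by omega⟩
    rw [if_pos (by omega), if_pos (by omega), if_pos (by omega),
      show 2 * k + d + 2 + 2 - 1 - 2 * (k + 1) = d + 1 by omega,
      show 2 * k + d + 2 + 1 - 1 - 2 * (k + 1) = d by omega,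
      show 2 * k + d + 2 - 1 - 2 * k = d + 1 by omega]
    exact qbTerm_succ_succ k d y
  · rw [if_pos (by omega), if_neg (by omega), if_pos (by omega), mul_zero, zero_add,
      show 2 * k + 1 + 2 - 1 - 2 * (k + 1) = 0 by omega, show 2 * k + 1 - 1 - 2 * k = 0 by omega]
    exact qbTerm_succ_zero k y
  · rw [if_neg (by omega), if_neg (by omega), if_neg (by omega)]
    ring

theorem qbFib_shifted_recursion (n : ℕ) (hn : 2 ≤ n) :
    qbFib n b s = x * qbFib (n - 1) (q * b) (q * s) +
      (q * s / ((1 - q * b) * (1 - q ^ 2 * b))) * qbFib (n - 2) (q ^ 2 * b) (q ^ 2 * s) := by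
  obtain ⟨m, rfl⟩ : ∃ m, n = m + 2 := ⟨n - 2, by omega⟩
  rw [show m + 2 - 1 = m + 1 by omega, show m + 2 - 2 = m by omega,
    qbFib_eq_sum_qbSummand (m := m + 2) (by omega), qbFib_eq_sum_qbSummand (m := m + 2) (by omega),
    qbFib_eq_sum_qbSummand (m := m + 1) (by omega), sum_range_succ', sum_range_succ' _ (m + 1)]
  simp only [qbSummand_succ_succ, sum_add_distrib, ← mul_sum, qbSummand_succ_zero]
  ring
end
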